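/- arXiv:2406.10359 — 3 statements merged into one kernel-verified Lean document; each statement's English description precedes it below -/
import Mathlib

section
/- Let d ≥ 1, let Θ be a nonempty type, let a : Equiv.Perm (Fin d) → Θ → Θ be a map (the permutation action on parameters), let J_y, J_g : Θ → ℝ, V : Θ → Fin d → ℝ, and let α > 0, β > 0 and w : Fin d → ℝ with 0 ≤ w_1 < w_2 < ⋯ < w_d. Assume the equivariance laws: for every permutation e and every θ ∈ Θ, J_y(a(e, θ)) = J_y(θ), J_g(a(e, θ)) = J_g(θ), and V(a(e, θ))(i) = V(θ)(e(i)) for all i. Define the loss J(θ) = J_y(θ) + α·∑_{i=1}^{d} w_i·V(θ)(i) + β·J_g(θ). If θ* is a global minimizer of J, i.e., J(θ*) ≤ J(θ) for all θ ∈ Θ, then the values V(θ*) are ordered decreasingly: V(θ*)(1) ≥ V(θ*)(2) ≥ ⋯ ≥ V(θ*)(d). -/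
open Finset

/-!
Transposing two coordinates of the parameters leaves `J_y` and `J_g` unchanged and only swaps
two variances inside the weighted sum, which changes `J` by `α (w i - w j) (V j - V i)`.
For `i < j` the weights satisfy `w i < w j`, so at a global minimizer this change is
nonnegative only if `V j ≤ V i`.
-/

theorem Finset.sum_mul_comp_swap_sub_sum_mul {ι R : Type*} [Fintype ι] [DecidableEq ι]
    [CommRing R] (f g : ι → R) (i j : ι) :
    ∑ k, f k * g (Equiv.swap i j k) - ∑ k, f k * g k = (f i - f j) * (g j - g i) := by
  rcases eq_or_ne i j with rfl | hij
  · simp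
  rw [← Finset.sum_sub_distrib, Fintype.sum_eq_add i j hij]
  · simp only [Equiv.swap_apply_left, Equiv.swap_apply_right]
    ring
  · rintro k ⟨hki, hkj⟩
    rw [Equiv.swap_apply_of_ne_of_ne hki hkj, sub_self]

theorem antitone_of_sum_mul_le_sum_mul_comp_swap {ι : Type*} [Fintype ι] [DecidableEq ι]
    [LinearOrder ι] {w v : ι → ℝ} (hw : StrictMono w)
    (hswap : ∀ i j, ∑ k, w k * v k ≤ ∑ k, w k * v (Equiv.swap i j k)) : Antitone v := by
  intro i j hij
  rcases hij.eq_or_lt with rfl | hlt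
  · rfl
  have hchange : 0 ≤ (w i - w j) * (v j - v i) := by
    rw [← Finset.sum_mul_comp_swap_sub_sum_mul]
    exact sub_nonneg.mpr (hswap i j)
  have hwij : w i - w j < 0 := sub_neg.mpr (hw hlt)
  linarith [nonpos_of_mul_nonneg_right hchange hwij]

theorem ssnno_global_min_ordered_variance_abstract_general
    (d : ℕ)
    (Θ : Type*)
    (a : Equiv.Perm (Fin d) → Θ → Θ)
    (Jy Jg : Θ → ℝ) (V : Θ → Fin d → ℝ)
    (α β : ℝ) (hα : 0 < α)
    (w : Fin d → ℝ) (hw : StrictMono w)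
    (hJy : ∀ (e : Equiv.Perm (Fin d)) (θ : Θ), Jy (a e θ) = Jy θ)
    (hJg : ∀ (e : Equiv.Perm (Fin d)) (θ : Θ), Jg (a e θ) = Jg θ)
    (hV : ∀ (e : Equiv.Perm (Fin d)) (θ : Θ) (i : Fin d), V (a e θ) i = V θ (e i))
    (J : Θ → ℝ)
    (hJ : ∀ θ, J θ = Jy θ + α * (∑ i, w i * V θ i) + β * Jg θ)
    (θs : Θ) (hmin : ∀ θ, J θs ≤ J θ) :
    ∀ i j : Fin d, i ≤ j → V θs j ≤ V θs i := by
  refine antitone_of_sum_mul_le_sum_mul_comp_swap hw fun i j => ?_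
  have hloss := hmin (a (Equiv.swap i j) θs)
  simp only [hJ, hJy, hJg, hV] at hloss
  exact le_of_mul_le_mul_left (by linarith) hα

/-- abstract Theorem 1, Existence of SSNNO.
Let `a` be a permutation action on the parameter space `Θ` under which `J_y` and
`J_g` are invariant and the state variances `V` are permuted,
`V (a e θ) i = V θ (e i)`.  If the weights `w` are nonnegative and strictly
increasing and `α, β > 0`, then any global minimizer `θ*` of the loss
`J(θ) = J_y(θ) + α·∑ i, w i · V θ i + β·J_g(θ)` has decreasingly ordered
values `V θ*`. -/
theorem ssnno_global_min_ordered_variance_abstract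
    (d : ℕ) (hd : 1 ≤ d)
    (Θ : Type*) [Nonempty Θ]
    (a : Equiv.Perm (Fin d) → Θ → Θ)
    (Jy Jg : Θ → ℝ) (V : Θ → Fin d → ℝ)
    (α β : ℝ) (hα : 0 < α) (hβ : 0 < β)
    (w : Fin d → ℝ) (hw0 : 0 ≤ w ⟨0, hd⟩) (hw : StrictMono w)
    (hJy : ∀ (e : Equiv.Perm (Fin d)) (θ : Θ), Jy (a e θ) = Jy θ)
    (hJg : ∀ (e : Equiv.Perm (Fin d)) (θ : Θ), Jg (a e θ) = Jg θ)
    (hV : ∀ (e : Equiv.Perm (Fin d)) (θ : Θ) (i : Fin d), V (a e θ) i = V θ (e i))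
    (J : Θ → ℝ)
    (hJ : ∀ θ, J θ = Jy θ + α * (∑ i, w i * V θ i) + β * Jg θ)
    (θs : Θ) (hmin : ∀ θ, J θs ≤ J θ) :
    ∀ i j : Fin d, i ≤ j → V θs j ≤ V θs i :=
  ssnno_global_min_ordered_variance_abstract_general d Θ a Jy Jg V α β hα w hw hJy hJg hV J hJ θs
    hmin
end

section
/- Fix training data u_0, …, u_{N−1} ∈ ℝ^m and y_0, …, y_{N−1} ∈ ℝ^p with N ≥ 2, constants α > 0, β > 0 and weights 0 ≤ w_1 < w_2 < ⋯ < w_d. Fix a network architecture: a state network f_NN with L ≥ 2 layers, dimensions l_0 = d + m, l_1, …, l_{L−1}, l_L = d, node activations φ_{i,j}, where the final layer uses one common activation for all d output nodes (φ_{L,j} = φ_L for all j), and an output network g_NN with H layers, dimensions h_0 = d, h_1, …, h_H = p, node activations ψ_{i,j}. A parameter θ consists of all state-network weight matrices and biases, all output-network weight matrices and biases, and an initial state x₀ ∈ ℝ^d. For each θ define the trajectory x_0(θ) = x₀, x_{k+1}(θ) = f_NN(x_k(θ), u_k) for 0 ≤ k ≤ N−2, the predictions ŷ_k(θ) = g_NN(x_k(θ)),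 the coordinate sample variances V_i(θ) of x_0(θ), …, x_{N−1}(θ), and the loss J(θ) = ∑_{k=0}^{N−1} ‖y_k − ŷ_k(θ)‖² + α·∑_{i=1}^{d} w_i·∑_{k=0}^{N−1} (x_k(θ)(i) − x̄(θ)(i))² + β·(sum of squares of all output-network weights and biases). Then every global minimizer θ* of J over all parameters of this architecture has decreasingly ordered state sample variances: V_1(θ*) ≥ V_2(θ*) ≥ ⋯ ≥ V_d(θ*). -/
open Finset

/-- One layer of a layered neural network: `v ↦ (j ↦ φ j ((A v + b) j))`. -/
noncomputable def layerMap {a c : ℕ} (A : Matrix (Fin c) (Fin a) ℝ) (bv : Fin c → ℝ)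
    (φ : Fin c → ℝ → ℝ) (v : Fin a → ℝ) : Fin c → ℝ :=
  fun j => φ j ((A.mulVec v + bv) j)

/-- Forward map of `L` consecutive layers with dimensions `l 0 → l 1 → ⋯ → l L`,
weight matrices `A i`, biases `b i` and node activations `φ i`. -/
noncomputable def netFwd (l : ℕ → ℕ) (A : ∀ i, Matrix (Fin (l (i + 1))) (Fin (l i)) ℝ)
    (b : ∀ i, Fin (l (i + 1)) → ℝ) (φ : ∀ i, Fin (l (i + 1)) → ℝ → ℝ) :
    (L : ℕ) → (Fin (l 0) → ℝ) → Fin (l L) → ℝ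
  | 0, v => v
  | (L + 1), v => layerMap (A L) (b L) (φ L) (netFwd l A b φ L v)

/-- The trainable parameters of the SSNNO architecture: all weight matrices and
biases of the state network (first layer `ℝ^{d+m} → ℝ^{lh 0}`, `Mid` middle layers
along the dimensions `lh`, last layer `ℝ^{lh Mid} → ℝ^d`, so `L = Mid + 2 ≥ 2`
layers in total), all weight matrices and biases of the output network
(first layer `ℝ^d → ℝ^{gh 0}`, then `Hg` further layers along `gh`, ending in
dimension `p = gh Hg`, so `H = Hg + 1 ≥ 1` layers), and the initial state `x₀`. -/
structure SSNNOParams (d m Mid : ℕ) (lh : ℕ → ℕ) (Hg : ℕ) (gh : ℕ → ℕ) where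
  A1 : Matrix (Fin (lh 0)) (Fin (d + m)) ℝ
  b1 : Fin (lh 0) → ℝ
  A : ∀ i : ℕ, Matrix (Fin (lh (i + 1))) (Fin (lh i)) ℝ
  b : ∀ i : ℕ, Fin (lh (i + 1)) → ℝ
  AL : Matrix (Fin d) (Fin (lh Mid)) ℝ
  bL : Fin d → ℝ
  Ag1 : Matrix (Fin (gh 0)) (Fin d) ℝ
  bg1 : Fin (gh 0) → ℝ
  Ag : ∀ i : ℕ, Matrix (Fin (gh (i + 1))) (Fin (gh i)) ℝ
  bg : ∀ i : ℕ, Fin (gh (i + 1)) → ℝ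
  x0 : Fin d → ℝ

/-- The state network `f_NN` of the SSNNO: first layer with activations `φ1`,
middle layers with activations `φ`, and a last layer using one common activation
`φL` for all `d` output nodes. -/
noncomputable def fNNp {d m Mid : ℕ} {lh : ℕ → ℕ} {Hg : ℕ} {gh : ℕ → ℕ}
    (φ1 : Fin (lh 0) → ℝ → ℝ) (φ : ∀ i, Fin (lh (i + 1)) → ℝ → ℝ) (φL : ℝ → ℝ)
    (θ : SSNNOParams d m Mid lh Hg gh) (x : Fin d → ℝ) (u : Fin m → ℝ) :
    Fin d → ℝ :=
  fun j => φL ((θ.AL.mulVec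
    (netFwd lh θ.A θ.b φ Mid (layerMap θ.A1 θ.b1 φ1 (Fin.append x u))) + θ.bL) j)

/-- The output network `g_NN` of the SSNNO, with `Hg + 1` layers and output
dimension `p = gh Hg`. -/
noncomputable def gNNp {d m Mid : ℕ} {lh : ℕ → ℕ} {Hg : ℕ} {gh : ℕ → ℕ}
    (ψ1 : Fin (gh 0) → ℝ → ℝ) (ψ : ∀ i, Fin (gh (i + 1)) → ℝ → ℝ)
    (θ : SSNNOParams d m Mid lh Hg gh) (x : Fin d → ℝ) : Fin (gh Hg) → ℝ :=
  netFwd gh θ.Ag θ.bg ψ Hg (layerMap θ.Ag1 θ.bg1 ψ1 x)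

/-- The state trajectory of the SSNNO: `x_0(θ) = θ.x0`,
`x_{k+1}(θ) = f_NN(x_k(θ), u_k)`. -/
noncomputable def xtrajP {d m Mid : ℕ} {lh : ℕ → ℕ} {Hg : ℕ} {gh : ℕ → ℕ}
    (φ1 : Fin (lh 0) → ℝ → ℝ) (φ : ∀ i, Fin (lh (i + 1)) → ℝ → ℝ) (φL : ℝ → ℝ)
    (u : ℕ → Fin m → ℝ) (θ : SSNNOParams d m Mid lh Hg gh) : ℕ → Fin d → ℝ
  | 0 => θ.x0
  | (k + 1) => fNNp φ1 φ φL θ (xtrajP φ1 φ φL u θ k) (u k)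

/-- The sample mean of the first `N` states of the SSNNO trajectory. -/
noncomputable def xbarP {d m Mid : ℕ} {lh : ℕ → ℕ} {Hg : ℕ} {gh : ℕ → ℕ}
    (φ1 : Fin (lh 0) → ℝ → ℝ) (φ : ∀ i, Fin (lh (i + 1)) → ℝ → ℝ) (φL : ℝ → ℝ)
    (N : ℕ) (u : ℕ → Fin m → ℝ) (θ : SSNNOParams d m Mid lh Hg gh) :
    Fin d → ℝ :=
  (N : ℝ)⁻¹ • ∑ k ∈ Finset.range N, xtrajP φ1 φ φL u θ k

/-- The sample variance of coordinate `i` of the first `N` states of the SSNNO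
trajectory. -/
noncomputable def varP {d m Mid : ℕ} {lh : ℕ → ℕ} {Hg : ℕ} {gh : ℕ → ℕ}
    (φ1 : Fin (lh 0) → ℝ → ℝ) (φ : ∀ i, Fin (lh (i + 1)) → ℝ → ℝ) (φL : ℝ → ℝ)
    (N : ℕ) (u : ℕ → Fin m → ℝ) (θ : SSNNOParams d m Mid lh Hg gh)
    (i : Fin d) : ℝ :=
  ((N : ℝ) - 1)⁻¹ *
    ∑ k ∈ Finset.range N, (xtrajP φ1 φ φL u θ k i - xbarP φ1 φ φL N u θ i) ^ 2

/-- The SSNNO training loss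
`J(θ) = ∑_k ‖y_k − ŷ_k(θ)‖² + α·∑_i w_i·∑_k (x_k(θ)_i − x̄(θ)_i)²`
`      + β·(sum of squares of all output-network weights and biases)`. -/
noncomputable def lossP {d m Mid : ℕ} {lh : ℕ → ℕ} {Hg : ℕ} {gh : ℕ → ℕ}
    (φ1 : Fin (lh 0) → ℝ → ℝ) (φ : ∀ i, Fin (lh (i + 1)) → ℝ → ℝ) (φL : ℝ → ℝ)
    (ψ1 : Fin (gh 0) → ℝ → ℝ) (ψ : ∀ i, Fin (gh (i + 1)) → ℝ → ℝ)
    (N : ℕ) (u : ℕ → Fin m → ℝ) (y : ℕ → Fin (gh Hg) → ℝ)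
    (α β : ℝ) (w : Fin d → ℝ)
    (θ : SSNNOParams d m Mid lh Hg gh) : ℝ :=
  (∑ k ∈ Finset.range N, ∑ j, (y k j - gNNp ψ1 ψ θ (xtrajP φ1 φ φL u θ k) j) ^ 2)
  + α * ∑ i, w i *
      (∑ k ∈ Finset.range N, (xtrajP φ1 φ φL u θ k i - xbarP φ1 φ φL N u θ i) ^ 2)
  + β * ((∑ j, ∑ i, (θ.Ag1 j i) ^ 2) + (∑ j, (θ.bg1 j) ^ 2)
      + ∑ t ∈ Finset.range Hg, ((∑ j, ∑ i, (θ.Ag t j i) ^ 2) + ∑ j, (θ.bg t j) ^ 2))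

/-!
Permuting the state coordinates of a parameter (the state columns of the first layers of both
networks, the rows and biases of the last state layer, and the initial state) permutes every state
of the trajectory in the same way; this is where the common activation of the last state layer is
needed. Predictions and the output-weight penalty are unchanged, so only the weighted variance
term of the loss moves. Comparing a minimizer with its image under the transposition of `i < j`
gives `(w j - w i) * (V i - V j) ≥ 0`, and `w i < w j` forces `V j ≤ V i`.
-/

theorem sum_mul_comp_swap_sub {ι R : Type*} [Fintype ι] [DecidableEq ι] [CommRing R]
    (w S : ι → R) (i j : ι) :
    ∑ k, w k * S (Equiv.swap i j k) - ∑ k, w k * S k = (w j - w i) * (S i - S j) := by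
  rcases eq_or_ne i j with rfl | hij
  · simp
  rw [← sum_sub_distrib, sum_eq_add_of_mem i j (mem_univ i) (mem_univ j) hij]
  · simp only [Equiv.swap_apply_left, Equiv.swap_apply_right]
    ring
  · rintro k - ⟨hki, hkj⟩
    rw [Equiv.swap_apply_of_ne_of_ne hki hkj, sub_self]

theorem le_of_sum_mul_le_sum_mul_comp_swap {ι R : Type*} [Fintype ι] [DecidableEq ι]
    [CommRing R] [LinearOrder R] [IsStrictOrderedRing R] {w S : ι → R} {i j : ι}
    (hw : w i < w j) (h : ∑ k, w k * S k ≤ ∑ k, w k * S (Equiv.swap i j k)) :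
    S j ≤ S i := by
  have hprod : 0 ≤ (w j - w i) * (S i - S j) := by
    rw [← sum_mul_comp_swap_sub]
    exact sub_nonneg.2 h
  exact sub_nonneg.1 (nonneg_of_mul_nonneg_right hprod (sub_pos.2 hw))

theorem Fin.append_comp_permCongr_sumCongr {α : Type*} {m n : ℕ} (x : Fin m → α)
    (u : Fin n → α) (σ : Equiv.Perm (Fin m)) (τ : Equiv.Perm (Fin n)) :
    Fin.append x u ∘ finSumFinEquiv.permCongr (σ.sumCongr τ) =
      Fin.append (x ∘ σ) (u ∘ τ) := by
  funext c
  induction c using Fin.addCases <;> simp [Equiv.permCongr_apply]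

theorem layerMap_submatrix_comp {a c : ℕ} (A : Matrix (Fin c) (Fin a) ℝ) (bv : Fin c → ℝ)
    (φ : Fin c → ℝ → ℝ) (e : Fin a ≃ Fin a) (v : Fin a → ℝ) :
    layerMap (A.submatrix id e) bv φ (v ∘ e) = layerMap A bv φ v := by
  unfold layerMap
  rw [Matrix.submatrix_mulVec_equiv]
  simp [Function.comp_assoc]

namespace SSNNOParams

variable {d m Mid : ℕ} {lh : ℕ → ℕ} {Hg : ℕ} {gh : ℕ → ℕ}

def permState (σ : Equiv.Perm (Fin d)) (θ : SSNNOParams d m Mid lh Hg gh) :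
    SSNNOParams d m Mid lh Hg gh :=
  { θ with
    A1 := θ.A1.submatrix id (finSumFinEquiv.permCongr (σ.sumCongr (Equiv.refl (Fin m))))
    AL := θ.AL.submatrix σ id
    bL := θ.bL ∘ σ
    Ag1 := θ.Ag1.submatrix id σ
    x0 := θ.x0 ∘ σ }

end SSNNOParams

section PermState

variable {d m Mid : ℕ} {lh : ℕ → ℕ} {Hg : ℕ} {gh : ℕ → ℕ}
  (φ1 : Fin (lh 0) → ℝ → ℝ) (φ : ∀ i, Fin (lh (i + 1)) → ℝ → ℝ) (φL : ℝ → ℝ)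
  (N : ℕ) (u : ℕ → Fin m → ℝ) (σ : Equiv.Perm (Fin d))
  (θ : SSNNOParams d m Mid lh Hg gh)

theorem fNNp_permState (x : Fin d → ℝ) (v : Fin m → ℝ) :
    fNNp φ1 φ φL (θ.permState σ) (x ∘ σ) v = fNNp φ1 φ φL θ x v ∘ σ := by
  have hin : Fin.append (x ∘ σ) v =
      Fin.append x v ∘ finSumFinEquiv.permCongr (σ.sumCongr (Equiv.refl (Fin m))) := by
    rw [Fin.append_comp_permCongr_sumCongr]
    rfl
  ext j
  simp only [fNNp, SSNNOParams.permState, hin, layerMap_submatrix_comp]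
  rfl

theorem xtrajP_permState (k : ℕ) :
    xtrajP φ1 φ φL u (θ.permState σ) k = xtrajP φ1 φ φL u θ k ∘ σ := by
  induction k with
  | zero => rfl
  | succ k ih => rw [xtrajP, xtrajP, ih, fNNp_permState]

theorem gNNp_permState (ψ1 : Fin (gh 0) → ℝ → ℝ) (ψ : ∀ i, Fin (gh (i + 1)) → ℝ → ℝ)
    (x : Fin d → ℝ) : gNNp ψ1 ψ (θ.permState σ) (x ∘ σ) = gNNp ψ1 ψ θ x := by
  simp only [gNNp]
  rw [← layerMap_submatrix_comp θ.Ag1 θ.bg1 ψ1 σ x]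
  rfl

theorem xbarP_permState :
    xbarP φ1 φ φL N u (θ.permState σ) = xbarP φ1 φ φL N u θ ∘ σ := by
  ext i
  simp [xbarP, xtrajP_permState]

noncomputable def sumSqDevP (i : Fin d) : ℝ :=
  ∑ k ∈ range N, (xtrajP φ1 φ φL u θ k i - xbarP φ1 φ φL N u θ i) ^ 2

theorem sumSqDevP_permState :
    sumSqDevP φ1 φ φL N u (θ.permState σ) = sumSqDevP φ1 φ φL N u θ ∘ σ := by
  ext i
  simp [sumSqDevP, xtrajP_permState, xbarP_permState]

theorem lossP_permState (ψ1 : Fin (gh 0) → ℝ → ℝ) (ψ : ∀ i, Fin (gh (i + 1)) → ℝ → ℝ)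
    (y : ℕ → Fin (gh Hg) → ℝ) (α β : ℝ) (w : Fin d → ℝ) :
    lossP φ1 φ φL ψ1 ψ N u y α β w (θ.permState σ) =
      lossP φ1 φ φL ψ1 ψ N u y α β w θ + α * (∑ i, w i * sumSqDevP φ1 φ φL N u θ (σ i) -
        ∑ i, w i * sumSqDevP φ1 φ φL N u θ i) := by
  have hfit : ∀ k, gNNp ψ1 ψ (θ.permState σ) (xtrajP φ1 φ φL u (θ.permState σ) k) =
      gNNp ψ1 ψ θ (xtrajP φ1 φ φL u θ k) := fun k => by
    rw [xtrajP_permState, gNNp_permState]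
  have hAg1 : ∀ r, ∑ c, (θ.permState σ).Ag1 r c ^ 2 = ∑ c, θ.Ag1 r c ^ 2 := fun r =>
    Equiv.sum_comp σ (fun c => θ.Ag1 r c ^ 2)
  have hvar := congrFun (sumSqDevP_permState φ1 φ φL N u σ θ)
  simp only [sumSqDevP, Function.comp_apply] at hvar
  simp only [lossP, hfit, hAg1, hvar]
  simp only [SSNNOParams.permState, sumSqDevP]
  ring

end PermState

theorem ssnno_global_min_ordered_variance_general
    (d m Mid : ℕ) (lh : ℕ → ℕ) (Hg : ℕ) (gh : ℕ → ℕ)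
    (φ1 : Fin (lh 0) → ℝ → ℝ) (φ : ∀ i, Fin (lh (i + 1)) → ℝ → ℝ) (φL : ℝ → ℝ)
    (ψ1 : Fin (gh 0) → ℝ → ℝ) (ψ : ∀ i, Fin (gh (i + 1)) → ℝ → ℝ)
    (N : ℕ) (hN : 2 ≤ N)
    (u : ℕ → Fin m → ℝ) (y : ℕ → Fin (gh Hg) → ℝ)
    (α β : ℝ) (hα : 0 < α)
    (w : Fin d → ℝ) (hw : StrictMono w)
    (θs : SSNNOParams d m Mid lh Hg gh)
    (hmin : ∀ θ : SSNNOParams d m Mid lh Hg gh,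
      lossP φ1 φ φL ψ1 ψ N u y α β w θs ≤ lossP φ1 φ φL ψ1 ψ N u y α β w θ) :
    ∀ i j : Fin d, i ≤ j → varP φ1 φ φL N u θs j ≤ varP φ1 φ φL N u θs i := by
  intro i j hij
  rcases hij.eq_or_lt with rfl | hlt
  · exact le_rfl
  have hS : sumSqDevP φ1 φ φL N u θs j ≤ sumSqDevP φ1 φ φL N u θs i := by
    refine le_of_sum_mul_le_sum_mul_comp_swap (hw hlt) ?_
    have hswap := hmin (θs.permState (Equiv.swap i j))
    rw [lossP_permState, le_add_iff_nonneg_right] at hswap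
    exact sub_nonneg.1 (nonneg_of_mul_nonneg_right hswap hα)
  have hN' : (0 : ℝ) ≤ ((N : ℝ) - 1)⁻¹ :=
    inv_nonneg.2 (sub_nonneg.2 (Nat.one_le_cast.2 (by omega)))
  exact mul_le_mul_of_nonneg_left hS hN'

/-- Theorem 1, Existence of SSNNO, concrete form.
For fixed training data `u, y` (`N ≥ 2`), hyperparameters `α, β > 0`, nonnegative
strictly increasing variance weights `w`, and a fixed architecture whose state
network uses one common activation `φL` in its final layer, every global minimizer
`θ*` of the variance-regularized training loss `J` has decreasingly ordered state
sample variances: `V_1(θ*) ≥ V_2(θ*) ≥ ⋯ ≥ V_d(θ*)`. -/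
theorem ssnno_global_min_ordered_variance
    (d m Mid : ℕ) (hd : 1 ≤ d) (lh : ℕ → ℕ) (Hg : ℕ) (gh : ℕ → ℕ)
    (φ1 : Fin (lh 0) → ℝ → ℝ) (φ : ∀ i, Fin (lh (i + 1)) → ℝ → ℝ) (φL : ℝ → ℝ)
    (ψ1 : Fin (gh 0) → ℝ → ℝ) (ψ : ∀ i, Fin (gh (i + 1)) → ℝ → ℝ)
    (N : ℕ) (hN : 2 ≤ N)
    (u : ℕ → Fin m → ℝ) (y : ℕ → Fin (gh Hg) → ℝ)
    (α β : ℝ) (hα : 0 < α) (hβ : 0 < β)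
    (w : Fin d → ℝ) (hw0 : 0 ≤ w ⟨0, hd⟩) (hw : StrictMono w)
    (θs : SSNNOParams d m Mid lh Hg gh)
    (hmin : ∀ θ : SSNNOParams d m Mid lh Hg gh,
      lossP φ1 φ φL ψ1 ψ N u y α β w θs ≤ lossP φ1 φ φL ψ1 ψ N u y α β w θ) :
    ∀ i j : Fin d, i ≤ j → varP φ1 φ φL N u θs j ≤ varP φ1 φ φL N u θs i :=
  ssnno_global_min_ordered_variance_general d m Mid lh Hg gh φ1 φ φL ψ1 ψ N hN u y α β hα w hw θs
    hmin
end

section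
/- Let f_NN be a layered state network with L ≥ 2 layers (dimensions l_0 = d + m, …, l_L = d, weights A_i, biases b_i, activations φ_{i,j}) and g_NN a layered output network with H ≥ 1 layers (dimensions h_0 = d, …, h_H = p, weights A^g_i, biases b^g_i, activations ψ_{i,j}). Fix 1 ≤ s ≤ d and a constant vector c ∈ ℝ^{d−s}. Partition each state x ∈ ℝ^d as x = (x_s, x_r) with x_s ∈ ℝ^s its first s coordinates and x_r ∈ ℝ^{d−s} its last d−s coordinates; partition the first-layer weight matrix columnwise as A_1 = [A_{1s} A_{1r} A_{1u}] (acting on x_s, x_r, u respectively), the last-layer weights rowwise as A_L = [A_{Ls}; A_{Lr}] and b_L = (b_{Ls}, b_{Lr}), and the output-network first-layer weights columnwise as A^g_1 = [A^g_{1s} A^g_{1r}]. Define the reduced state network f_s of order s: first layer z, u ↦ (j ↦ φ_{1,j}((A_{1s} z + A_{1u} u + (b_1 + A_{1r} c))(j))), middle layers f_2, …, f_{L−1} unchanged, last layer w ↦ (j ↦ φ_{L,j}((A_{Ls} w + b_{Ls})(j)) for j ≤ s); and the reduced output network g_s: first layer z ↦ (j ↦ ψ_{1,j}((A^g_{1s}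 z + (b^g_1 + A^g_{1r} c))(j))), remaining layers unchanged. Let u_0, …, u_{K−1} ∈ ℝ^m and let x_0, …, x_K be a trajectory with x_{k+1} = f_NN(x_k, u_k), and suppose the residual coordinates are constant: x_{r,k} = c for all 0 ≤ k ≤ K. Then the significant coordinates z_k := x_{s,k} satisfy the reduced recursion z_{k+1} = f_s(z_k, u_k) for all 0 ≤ k ≤ K−1, and the reduced outputs coincide with the full outputs: g_s(z_k) = g_NN(x_k) for all 0 ≤ k ≤ K. -/
/-! Fixing the residual coordinates at `c` turns `A_{1r} c` into a constant that can be
absorbed into the first-layer bias, while reading off the significant coordinates of the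
last layer only uses the rows `A_{Ls}, b_{Ls}`. Hence, as long as the residual states stay
at `c`, the reduced networks compute exactly the significant part of the full state update
and the full output. -/

open Matrix

theorem Matrix.mulVec_finAppend {ι R : Type*} [NonUnitalNonAssocSemiring R] {a b : ℕ}
    (A : Matrix ι (Fin (a + b)) R) (v : Fin a → R) (w : Fin b → R) :
    A *ᵥ Fin.append v w =
      A.submatrix id (Fin.castAdd b) *ᵥ v + A.submatrix id (Fin.natAdd a) *ᵥ w := by
  ext j
  simp only [Pi.add_apply, Matrix.mulVec, dotProduct, Fin.sum_univ_add, Fin.append_left,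
    Fin.append_right, Matrix.submatrix_apply, id]

theorem layerMap_finAppend {a a' c : ℕ} (A : Matrix (Fin c) (Fin (a + a')) ℝ)
    (bv : Fin c → ℝ) (φ : Fin c → ℝ → ℝ) (v : Fin a → ℝ) (w : Fin a' → ℝ) :
    layerMap A bv φ (Fin.append v w) =
      layerMap (A.submatrix id (Fin.castAdd a'))
        (bv + A.submatrix id (Fin.natAdd a) *ᵥ w) φ v := by
  ext j
  simp only [layerMap, Matrix.mulVec_finAppend, Pi.add_apply]
  congr 1
  ring

theorem layerMap_comp {a c c' : ℕ} (A : Matrix (Fin c) (Fin a) ℝ) (bv : Fin c → ℝ)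
    (φ : Fin c → ℝ → ℝ) (e : Fin c' → Fin c) (v : Fin a → ℝ) :
    (fun j => layerMap A bv φ v (e j)) =
      layerMap (A.submatrix e id) (bv ∘ e) (fun j => φ (e j)) v :=
  rfl

theorem rssnno_exact_reduction_general
    (s r m : ℕ)
    (Mid : ℕ) (lh : ℕ → ℕ)
    (A1 : Matrix (Fin (lh 0)) (Fin (s + r + m)) ℝ) (b1 : Fin (lh 0) → ℝ)
    (φ1 : Fin (lh 0) → ℝ → ℝ)
    (A : ∀ i, Matrix (Fin (lh (i + 1))) (Fin (lh i)) ℝ)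
    (b : ∀ i, Fin (lh (i + 1)) → ℝ)
    (φ : ∀ i, Fin (lh (i + 1)) → ℝ → ℝ)
    (AL : Matrix (Fin (s + r)) (Fin (lh Mid)) ℝ) (bL : Fin (s + r) → ℝ)
    (φL : Fin (s + r) → ℝ → ℝ)
    (Hg : ℕ) (gh : ℕ → ℕ)
    (Ag1 : Matrix (Fin (gh 0)) (Fin (s + r)) ℝ) (bg1 : Fin (gh 0) → ℝ)
    (ψ1 : Fin (gh 0) → ℝ → ℝ)
    (Ag : ∀ i, Matrix (Fin (gh (i + 1))) (Fin (gh i)) ℝ)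
    (bg : ∀ i, Fin (gh (i + 1)) → ℝ)
    (ψ : ∀ i, Fin (gh (i + 1)) → ℝ → ℝ)
    (fNN : (Fin (s + r) → ℝ) → (Fin m → ℝ) → Fin (s + r) → ℝ)
    (hfNN : ∀ x u, fNN x u =
      layerMap AL bL φL (netFwd lh A b φ Mid (layerMap A1 b1 φ1 (Fin.append x u))))
    (gNN : (Fin (s + r) → ℝ) → Fin (gh Hg) → ℝ)
    (hgNN : ∀ x, gNN x = netFwd gh Ag bg ψ Hg (layerMap Ag1 bg1 ψ1 x))
    (c : Fin r → ℝ)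
    (A1s : Matrix (Fin (lh 0)) (Fin s) ℝ)
    (hA1s : ∀ j i, A1s j i = A1 j (Fin.castAdd m (Fin.castAdd r i)))
    (A1r : Matrix (Fin (lh 0)) (Fin r) ℝ)
    (hA1r : ∀ j i, A1r j i = A1 j (Fin.castAdd m (Fin.natAdd s i)))
    (A1u : Matrix (Fin (lh 0)) (Fin m) ℝ)
    (hA1u : ∀ j i, A1u j i = A1 j (Fin.natAdd (s + r) i))
    (ALs : Matrix (Fin s) (Fin (lh Mid)) ℝ)
    (hALs : ∀ j i, ALs j i = AL (Fin.castAdd r j) i)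
    (bLs : Fin s → ℝ) (hbLs : ∀ j, bLs j = bL (Fin.castAdd r j))
    (Ag1s : Matrix (Fin (gh 0)) (Fin s) ℝ)
    (hAg1s : ∀ j i, Ag1s j i = Ag1 j (Fin.castAdd r i))
    (Ag1r : Matrix (Fin (gh 0)) (Fin r) ℝ)
    (hAg1r : ∀ j i, Ag1r j i = Ag1 j (Fin.natAdd s i))
    (fs : (Fin s → ℝ) → (Fin m → ℝ) → Fin s → ℝ)
    (hfs : ∀ z uu, fs z uu = fun j => φL (Fin.castAdd r j)
      ((ALs.mulVec (netFwd lh A b φ Mid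
        (fun j1 => φ1 j1 ((A1s.mulVec z + A1u.mulVec uu + (b1 + A1r.mulVec c)) j1)))
        + bLs) j))
    (gs : (Fin s → ℝ) → Fin (gh Hg) → ℝ)
    (hgs : ∀ z, gs z = netFwd gh Ag bg ψ Hg
      (fun j => ψ1 j ((Ag1s.mulVec z + (bg1 + Ag1r.mulVec c)) j)))
    (K : ℕ) (u : ℕ → Fin m → ℝ) (x : ℕ → Fin (s + r) → ℝ)
    (hx : ∀ k < K, x (k + 1) = fNN (x k) (u k))
    (hres : ∀ k ≤ K, ∀ i : Fin r, x k (Fin.natAdd s i) = c i)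
    (z : ℕ → Fin s → ℝ) (hz : ∀ k i, z k i = x k (Fin.castAdd r i)) :
    (∀ k < K, z (k + 1) = fs (z k) (u k)) ∧
    (∀ k ≤ K, gs (z k) = gNN (x k)) := by
  have hA1s' : A1s = (A1.submatrix id (Fin.castAdd m)).submatrix id (Fin.castAdd r) :=
    Matrix.ext hA1s
  have hA1r' : A1r = (A1.submatrix id (Fin.castAdd m)).submatrix id (Fin.natAdd s) :=
    Matrix.ext hA1r
  have hA1u' : A1u = A1.submatrix id (Fin.natAdd (s + r)) := Matrix.ext hA1u
  have hALs' : ALs = AL.submatrix (Fin.castAdd r) id := Matrix.ext hALs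
  have hbLs' : bLs = bL ∘ Fin.castAdd r := funext hbLs
  have hAg1s' : Ag1s = Ag1.submatrix id (Fin.castAdd r) := Matrix.ext hAg1s
  have hAg1r' : Ag1r = Ag1.submatrix id (Fin.natAdd s) := Matrix.ext hAg1r
  have hstate : ∀ k ≤ K, x k = Fin.append (z k) c := fun k hk => by
    rw [← Fin.append_castAdd_natAdd (f := x k)]
    congr 1 <;> funext i
    exacts [(hz k i).symm, hres k hk i]
  have hsig : ∀ k, z k = fun i => x k (Fin.castAdd r i) := fun k => funext (hz k)
  constructor
  · intro k hk
    rw [hfs, hsig, hx k hk, hfNN, hstate k hk.le, layerMap_finAppend, layerMap_finAppend,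
      ← hA1s', ← hA1r', ← hA1u', hALs', hbLs', layerMap_comp]
    congr 3
    ext j1
    simp only [layerMap, Pi.add_apply]
    congr 1
    ring
  · intro k hk
    rw [hgs, hgNN, hstate k hk, layerMap_finAppend, ← hAg1s', ← hAg1r']
    rfl

/-- exact model-order reduction step for R-SSNNO.
The state dimension is `d = s + r` with `s` significant and `r = d − s` residual
coordinates; states are partitioned as `x = (x_s, x_r)` with
`x_s i = x (castAdd r i)` and `x_r i = x (natAdd s i)`.  The state network `f_NN`
has `L = Mid + 2` layers (explicit first and last layers, `Mid` middle layers) and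
the output network `g_NN` has `H = Hg + 1` layers (explicit first layer, `Hg`
further layers).  The reduced networks `f_s` and `g_s` of order `s` are obtained
from the columnwise partitions `A1 = [A1s A1r A1u]`, `Ag1 = [Ag1s Ag1r]`, the
rowwise partitions `ALs, bLs` of the last state layer, fixing the residual
coordinates at the constant vector `c` and absorbing `A1r c` and `Ag1r c` into the
first-layer biases.  If along a trajectory `x_{k+1} = f_NN(x_k, u_k)`
(for `k < K`) the residual coordinates are constant, `x_{r,k} = c` for `k ≤ K`,
then the significant coordinates `z_k = x_{s,k}` satisfy the reduced recursion
`z_{k+1} = f_s(z_k, u_k)` for `k < K`, and the reduced outputs coincide with the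
full outputs, `g_s(z_k) = g_NN(x_k)` for `k ≤ K`. -/
theorem rssnno_exact_reduction
    (s r m : ℕ) (hs : 1 ≤ s)
    (Mid : ℕ) (lh : ℕ → ℕ)
    (A1 : Matrix (Fin (lh 0)) (Fin (s + r + m)) ℝ) (b1 : Fin (lh 0) → ℝ)
    (φ1 : Fin (lh 0) → ℝ → ℝ)
    (A : ∀ i, Matrix (Fin (lh (i + 1))) (Fin (lh i)) ℝ)
    (b : ∀ i, Fin (lh (i + 1)) → ℝ)
    (φ : ∀ i, Fin (lh (i + 1)) → ℝ → ℝ)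
    (AL : Matrix (Fin (s + r)) (Fin (lh Mid)) ℝ) (bL : Fin (s + r) → ℝ)
    (φL : Fin (s + r) → ℝ → ℝ)
    (Hg : ℕ) (gh : ℕ → ℕ)
    (Ag1 : Matrix (Fin (gh 0)) (Fin (s + r)) ℝ) (bg1 : Fin (gh 0) → ℝ)
    (ψ1 : Fin (gh 0) → ℝ → ℝ)
    (Ag : ∀ i, Matrix (Fin (gh (i + 1))) (Fin (gh i)) ℝ)
    (bg : ∀ i, Fin (gh (i + 1)) → ℝ)
    (ψ : ∀ i, Fin (gh (i + 1)) → ℝ → ℝ)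
    (fNN : (Fin (s + r) → ℝ) → (Fin m → ℝ) → Fin (s + r) → ℝ)
    (hfNN : ∀ x u, fNN x u =
      layerMap AL bL φL (netFwd lh A b φ Mid (layerMap A1 b1 φ1 (Fin.append x u))))
    (gNN : (Fin (s + r) → ℝ) → Fin (gh Hg) → ℝ)
    (hgNN : ∀ x, gNN x = netFwd gh Ag bg ψ Hg (layerMap Ag1 bg1 ψ1 x))
    (c : Fin r → ℝ)
    (A1s : Matrix (Fin (lh 0)) (Fin s) ℝ)
    (hA1s : ∀ j i, A1s j i = A1 j (Fin.castAdd m (Fin.castAdd r i)))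
    (A1r : Matrix (Fin (lh 0)) (Fin r) ℝ)
    (hA1r : ∀ j i, A1r j i = A1 j (Fin.castAdd m (Fin.natAdd s i)))
    (A1u : Matrix (Fin (lh 0)) (Fin m) ℝ)
    (hA1u : ∀ j i, A1u j i = A1 j (Fin.natAdd (s + r) i))
    (ALs : Matrix (Fin s) (Fin (lh Mid)) ℝ)
    (hALs : ∀ j i, ALs j i = AL (Fin.castAdd r j) i)
    (bLs : Fin s → ℝ) (hbLs : ∀ j, bLs j = bL (Fin.castAdd r j))
    (Ag1s : Matrix (Fin (gh 0)) (Fin s) ℝ)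
    (hAg1s : ∀ j i, Ag1s j i = Ag1 j (Fin.castAdd r i))
    (Ag1r : Matrix (Fin (gh 0)) (Fin r) ℝ)
    (hAg1r : ∀ j i, Ag1r j i = Ag1 j (Fin.natAdd s i))
    (fs : (Fin s → ℝ) → (Fin m → ℝ) → Fin s → ℝ)
    (hfs : ∀ z uu, fs z uu = fun j => φL (Fin.castAdd r j)
      ((ALs.mulVec (netFwd lh A b φ Mid
        (fun j1 => φ1 j1 ((A1s.mulVec z + A1u.mulVec uu + (b1 + A1r.mulVec c)) j1)))
        + bLs) j))
    (gs : (Fin s → ℝ) → Fin (gh Hg) → ℝ)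
    (hgs : ∀ z, gs z = netFwd gh Ag bg ψ Hg
      (fun j => ψ1 j ((Ag1s.mulVec z + (bg1 + Ag1r.mulVec c)) j)))
    (K : ℕ) (u : ℕ → Fin m → ℝ) (x : ℕ → Fin (s + r) → ℝ)
    (hx : ∀ k < K, x (k + 1) = fNN (x k) (u k))
    (hres : ∀ k ≤ K, ∀ i : Fin r, x k (Fin.natAdd s i) = c i)
    (z : ℕ → Fin s → ℝ) (hz : ∀ k i, z k i = x k (Fin.castAdd r i)) :
    (∀ k < K, z (k + 1) = fs (z k) (u k)) ∧
    (∀ k ≤ K, gs (z k) = gNN (x k)) :=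
  rssnno_exact_reduction_general s r m Mid lh A1 b1 φ1 A b φ AL bL φL Hg gh Ag1 bg1 ψ1 Ag bg ψ fNN
    hfNN gNN hgNN c A1s hA1s A1r hA1r A1u hA1u ALs hALs bLs hbLs Ag1s hAg1s Ag1r hAg1r fs hfs gs hgs
    K u x hx hres z hz
end
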